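/- arXiv:2005.07568 — 2 statements merged into one kernel-verified Lean document; each statement's English description precedes it below -/
import Mathlib

section
/- In a cDG containing all loops, if (α,β,C) is not a virtual collider tripath and α≠β, then β and α are m-separated by an({α,β}∪C)∖{α,β}. -/
universe u

/-- A directed correlation graph (cDG): directed edges (loops allowed) and
blunt edges (symmetric, no loops). -/
structure CDG (V : Type u) where
  dir : V → V → Prop
  blunt : V → V → Prop
  blunt_symm : ∀ a b, blunt a b → blunt b a
  blunt_irrefl : ∀ a, ¬ blunt a a

namespace CDG

variable {V : Type u}

/-- `anc D a b` : `a` is an ancestor of `b` (directed path from `a` to `b`;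
every node is its own ancestor). -/
def anc (D : CDG V) (a b : V) : Prop := Relation.ReflTransGen D.dir a b

/-- `an(C)`: the set of ancestors of `C`. -/
def ancSet (D : CDG V) (C : Set V) : Set V := {a | ∃ c ∈ C, D.anc a c}

/-- An edge instance between `a` and `b`, with its orientation. -/
inductive Edge (D : CDG V) : V → V → Type u
  | fwd {a b : V} : D.dir a b → Edge D a b
  | bwd {a b : V} : D.dir b a → Edge D a b
  | bl  {a b : V} : D.blunt a b → Edge D a b

/-- The edge has a neck (head or stump) at its left endpoint. -/
def Edge.neckLeft {D : CDG V} {a b : V} : D.Edge a b → Prop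
  | .fwd _ => False
  | .bwd _ => True
  | .bl _ => True

/-- The edge has a neck (head or stump) at its right endpoint. -/
def Edge.neckRight {D : CDG V} {a b : V} : D.Edge a b → Prop
  | .fwd _ => True
  | .bwd _ => False
  | .bl _ => True

/-- The edge has a head (arrowhead) at its right endpoint. -/
def Edge.headRight {D : CDG V} {a b : V} : D.Edge a b → Prop
  | .fwd _ => True
  | _ => False

/-- The edge is a blunt edge. -/
def Edge.isBlunt {D : CDG V} {a b : V} : D.Edge a b → Prop
  | .bl _ => True
  | _ => False

/-- A walk from `a` to `b` in `D`. -/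
inductive Walk (D : CDG V) : V → V → Type u
  | nil (a : V) : Walk D a a
  | cons {a m c : V} : D.Edge a m → Walk D m c → Walk D a c

namespace Walk

variable {D : CDG V}

def length : ∀ {a b : V}, D.Walk a b → ℕ
  | _, _, .nil _ => 0
  | _, _, .cons _ w => w.length + 1

def support : ∀ {a b : V}, D.Walk a b → List V
  | a, _, .nil _ => [a]
  | a, _, .cons _ w => a :: w.support

/-- The list of nonendpoint (internal) node instances of a walk. -/
def internal : ∀ {a b : V}, D.Walk a b → List V
  | _, _, .nil _ => []
  | _, _, .cons _ (.nil _) => []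
  | _, _, .cons (m := m) _ w => m :: w.internal

/-- The final edge of the walk has a head at the terminal node. -/
def lastHead : ∀ {a b : V}, D.Walk a b → Prop
  | _, _, .nil _ => False
  | _, _, .cons e (.nil _) => e.headRight
  | _, _, .cons _ w => w.lastHead

/-- Every collider on the walk is in `an(C)` and no noncollider is in `C`. -/
def mOpen (C : Set V) : ∀ {a b : V}, D.Walk a b → Prop
  | _, _, .nil _ => True
  | _, _, .cons _ (.nil _) => True
  | _, _, .cons (m := m) e₁ (.cons e₂ w) =>
      ((e₁.neckRight ∧ e₂.neckLeft) → m ∈ D.ancSet C) ∧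
      (¬ (e₁.neckRight ∧ e₂.neckLeft) → m ∉ C) ∧
      mOpen C (Walk.cons e₂ w)

/-- Every nonendpoint node of the walk is a collider. -/
def allColliders : ∀ {a b : V}, D.Walk a b → Prop
  | _, _, .nil _ => True
  | _, _, .cons _ (.nil _) => True
  | _, _, .cons e₁ (.cons e₂ w) =>
      e₁.neckRight ∧ e₂.neckLeft ∧ allColliders (Walk.cons e₂ w)

/-- Every edge of the walk is blunt. -/
def allBlunt : ∀ {a b : V}, D.Walk a b → Prop
  | _, _, .nil _ => True
  | _, _, .cons e w => e.isBlunt ∧ w.allBlunt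

end Walk

/-- There is a μ-connecting walk from `a` to `b` given `C`. -/
def muConn (D : CDG V) (C : Set V) (a b : V) : Prop :=
  a ∉ C ∧ ∃ w : D.Walk a b, w.mOpen C ∧ w.lastHead

/-- `B` is μ-separated from `A` given `C`. -/
def muSep (D : CDG V) (A B C : Set V) : Prop :=
  ∀ a ∈ A, ∀ b ∈ B, ¬ D.muConn C a b

/-- The independence model of `D`: all μ-separation triples. -/
def indep (D : CDG V) : Set (Set V × Set V × Set V) :=
  {p | D.muSep p.1 p.2.1 p.2.2}

/-- A (nontrivial) collider path. -/
def IsColliderPath {D : CDG V} {a b : V} (w : D.Walk a b) : Prop :=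
  0 < w.length ∧ w.support.Nodup ∧ w.allColliders

/-- `a` and `b` are collider connected: some nontrivial walk between them has
every nonendpoint node a collider. -/
def colliderConn (D : CDG V) (a b : V) : Prop :=
  ∃ w : D.Walk a b, 0 < w.length ∧ w.allColliders

/-- A weak inducing path from `a` to `b`: a collider path whose nonendpoint
nodes are all ancestors of `a` or of `b`. -/
def WeakInducing (D : CDG V) (a b : V) : Prop :=
  ∃ w : D.Walk a b, IsColliderPath w ∧ ∀ m ∈ w.internal, D.anc m a ∨ D.anc m b

/-- A weak inducing path between `a` and `b` (in either direction). -/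
def WeakInducingBetween (D : CDG V) (a b : V) : Prop :=
  D.WeakInducing a b ∨ D.WeakInducing b a

end CDG

/-- The strongly connected component of `v`. -/
def CDG.scc {V : Type} (D : CDG V) (v : V) : Set V :=
  {w | D.anc v w ∧ D.anc w v}

/-- `C` is a strongly connected component of `D`. -/
def CDG.IsSCC {V : Type} (D : CDG V) (C : Set V) : Prop := ∃ v, C = D.scc v

/-- There is an `m`-connecting path between `a` and `b` given `S`: a path with
every collider in an(S) and no noncollider in S. -/
def CDG.mConn {V : Type} (D : CDG V) (S : Set V) (a b : V) : Prop :=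
  ∃ w : D.Walk a b, 0 < w.length ∧ w.support.Nodup ∧ w.mOpen S

/-- `A` and `B` are m-separated given `S`. -/
def CDG.mSep {V : Type} (D : CDG V) (A B S : Set V) : Prop :=
  ∀ a ∈ A, ∀ b ∈ B, ¬ D.mConn S a b

/-- `(α,β,C)` is a virtual collider tripath: `C` is a strongly connected
component or ∅ and some nontrivial collider path from α to β has all its
nonendpoint nodes in an({α,β}∪C). -/
def CDG.VCT {V : Type} (D : CDG V) (α β : V) (C : Set V) : Prop :=
  (D.IsSCC C ∨ C = ∅) ∧
  ∃ w : D.Walk α β, CDG.IsColliderPath w ∧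
    ∀ m ∈ w.internal, m ∈ D.ancSet ({α, β} ∪ C)


/-!
Let `U = {α, β} ∪ C` and `S = an(U) \ {α, β}`, and suppose a path from `β` to `α` were
`m`-connecting given `S`. Every noncollider `m` on it has an outgoing edge along the path;
following the directed edges from `m` in that direction ends at a collider (which lies in
`an(S) ⊆ an(U)`) or at an endpoint, so `m ∈ an(U)`. As the path is simple, `m ∉ {α, β}`, so
`m ∈ S`, which a noncollider of an open path cannot be. Hence every internal node is a collider
in `an(U)`, and the reversed path is a virtual collider tripath.
-/

namespace CDG

variable {V : Type u} {D : CDG V}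

lemma ancSet_subset_of_subset_ancSet {S U : Set V} (hS : S ⊆ D.ancSet U) :
    D.ancSet S ⊆ D.ancSet U := by
  rintro x ⟨s, hs, hxs⟩
  obtain ⟨u, hu, hsu⟩ := hS hs
  exact ⟨u, hu, hxs.trans hsu⟩

lemma mem_ancSet_of_dir {U : Set V} {x y : V} (hxy : D.dir x y) (hy : y ∈ D.ancSet U) :
    x ∈ D.ancSet U := by
  obtain ⟨u, hu, hyu⟩ := hy
  exact ⟨u, hu, Relation.ReflTransGen.head hxy hyu⟩

lemma subset_ancSet (U : Set V) : U ⊆ D.ancSet U :=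
  fun u hu => ⟨u, hu, Relation.ReflTransGen.refl⟩

def Edge.rev : ∀ {a b : V}, D.Edge a b → D.Edge b a
  | _, _, .fwd h => .bwd h
  | _, _, .bwd h => .fwd h
  | _, _, .bl h => .bl (D.blunt_symm _ _ h)

@[simp]
lemma Edge.neckLeft_rev {a b : V} (e : D.Edge a b) : e.rev.neckLeft ↔ e.neckRight := by
  cases e <;> simp [Edge.rev, Edge.neckLeft, Edge.neckRight]

@[simp]
lemma Edge.neckRight_rev {a b : V} (e : D.Edge a b) : e.rev.neckRight ↔ e.neckLeft := by
  cases e <;> simp [Edge.rev, Edge.neckLeft, Edge.neckRight]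

namespace Walk

def snoc : ∀ {a b c : V}, D.Walk a b → D.Edge b c → D.Walk a c
  | _, _, _, .nil _, e => .cons e (.nil _)
  | _, _, _, .cons f w, e => .cons f (w.snoc e)

def reverse : ∀ {a b : V}, D.Walk a b → D.Walk b a
  | _, _, .nil a => .nil a
  | _, _, .cons e w => w.reverse.snoc e.rev

def lastNeckRight : ∀ {a b : V}, D.Walk a b → Prop
  | _, _, .nil _ => True
  | _, _, .cons e (.nil _) => e.neckRight
  | _, _, .cons _ w => w.lastNeckRight

lemma length_snoc : ∀ {a b c : V} (w : D.Walk a b) (e : D.Edge b c),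
    (w.snoc e).length = w.length + 1
  | _, _, _, .nil _, _ => rfl
  | _, _, _, .cons _ w, e => by simp [snoc, length, length_snoc w e]

lemma length_reverse : ∀ {a b : V} (w : D.Walk a b), w.reverse.length = w.length
  | _, _, .nil _ => rfl
  | _, _, .cons _ w => by simp [reverse, length, length_snoc, length_reverse w]

lemma support_snoc : ∀ {a b c : V} (w : D.Walk a b) (e : D.Edge b c),
    (w.snoc e).support = w.support ++ [c]
  | _, _, _, .nil _, _ => rfl
  | _, _, _, .cons _ w, e => by simp [snoc, support, support_snoc w e]

lemma support_reverse : ∀ {a b : V} (w : D.Walk a b), w.reverse.support = w.support.reverse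
  | _, _, .nil _ => rfl
  | _, _, .cons _ w => by simp [reverse, support, support_snoc, support_reverse w]

lemma internal_eq_tail_dropLast : ∀ {a b : V} (w : D.Walk a b),
    w.internal = w.support.tail.dropLast
  | _, _, .nil _ => rfl
  | _, _, .cons _ (.nil _) => rfl
  | _, _, .cons _ (.cons g w) => by
      change _ :: _ = _
      rw [internal_eq_tail_dropLast (.cons g w)]
      cases w <;> rfl

lemma internal_reverse {a b : V} (w : D.Walk a b) : w.reverse.internal = w.internal.reverse := by
  simp [internal_eq_tail_dropLast, support_reverse, List.tail_dropLast]

lemma support_eq_cons_internal_append : ∀ {a b : V} (w : D.Walk a b), 0 < w.length →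
    w.support = a :: (w.internal ++ [b])
  | _, _, .cons _ (.nil _), _ => rfl
  | _, _, .cons _ (.cons g w), _ => by
      rw [support, support_eq_cons_internal_append (.cons g w) (Nat.succ_pos _)]
      rfl

lemma endpoints_not_mem_internal {a b : V} (w : D.Walk a b) (hlen : 0 < w.length)
    (hnodup : w.support.Nodup) : a ∉ w.internal ∧ b ∉ w.internal := by
  rw [support_eq_cons_internal_append w hlen, List.nodup_cons, List.nodup_append] at hnodup
  obtain ⟨ha, -, -, hb⟩ := hnodup
  exact ⟨fun h => ha (List.mem_append_left _ h), fun h => hb b h b (List.mem_singleton_self b) rfl⟩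

lemma lastNeckRight_snoc : ∀ {a b c : V} (w : D.Walk a b) (e : D.Edge b c),
    (w.snoc e).lastNeckRight ↔ e.neckRight
  | _, _, _, .nil _, _ => Iff.rfl
  | _, _, _, .cons _ (.nil _), _ => Iff.rfl
  | _, _, _, .cons _ (.cons g w), e => lastNeckRight_snoc (.cons g w) e

lemma allColliders_snoc {a b c : V} (w : D.Walk a b) (e : D.Edge b c)
    (hw : w.allColliders) (hb : w.lastNeckRight) (he : e.neckLeft) :
    (w.snoc e).allColliders := by
  induction w with
  | nil => trivial
  | cons f w ih =>
    cases w with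
    | nil => exact ⟨hb, he, trivial⟩
    | cons g w => exact ⟨hw.1, hw.2.1, ih e hw.2.2 hb he⟩

lemma allColliders.reverse : ∀ {a b : V} {w : D.Walk a b}, w.allColliders →
    w.reverse.allColliders
  | _, _, .nil _, _ => trivial
  | _, _, .cons _ (.nil _), _ => trivial
  | _, _, .cons e (.cons g w), hcol => by
      obtain ⟨he, hg, hw⟩ := hcol
      exact allColliders_snoc _ _ hw.reverse
        ((lastNeckRight_snoc _ g.rev).mpr ((Edge.neckRight_rev g).mpr hg))
        ((Edge.neckLeft_rev e).mpr he)

variable {S U : Set V}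

/-- The tail of a noncollider leads, along an open walk, to a collider or to the endpoint. -/
lemma mem_ancSet_of_mOpen_of_not_neckLeft (hS : S ⊆ D.ancSet U) {a x b : V}
    (e : D.Edge a x) (w : D.Walk x b) (hopen : (Walk.cons e w).mOpen S)
    (he : ¬ e.neckLeft) (hb : b ∈ D.ancSet U) : a ∈ D.ancSet U := by
  cases e with
  | bwd => exact absurd trivial he
  | bl => exact absurd trivial he
  | fwd hax =>
    refine mem_ancSet_of_dir hax ?_
    cases w with
    | nil => exact hb
    | cons f w =>
      obtain ⟨hcollider, -, hrest⟩ := hopen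
      by_cases hf : f.neckLeft
      · exact ancSet_subset_of_subset_ancSet hS (hcollider ⟨trivial, hf⟩)
      · exact mem_ancSet_of_mOpen_of_not_neckLeft hS f w hrest hf hb

lemma internal_subset_ancSet_of_mOpen (hS : S ⊆ D.ancSet U) :
    ∀ {a b : V} (w : D.Walk a b), w.mOpen S → a ∈ D.ancSet U → b ∈ D.ancSet U →
      ∀ m ∈ w.internal, m ∈ D.ancSet U
  | _, _, .nil _, _, _, _ => by simp [internal]
  | _, _, .cons _ (.nil _), _, _, _ => by simp [internal]
  | _, _, .cons (m := x) e (.cons f w), hopen, ha, hb => by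
      obtain ⟨hcollider, -, hrest⟩ := hopen
      have hx : x ∈ D.ancSet U := by
        by_cases hc : e.neckRight ∧ f.neckLeft
        · exact ancSet_subset_of_subset_ancSet hS (hcollider hc)
        by_cases hf : f.neckLeft
        · cases e with
          | bwd hxa => exact mem_ancSet_of_dir hxa ha
          | fwd => exact absurd ⟨trivial, hf⟩ hc
          | bl => exact absurd ⟨trivial, hf⟩ hc
        · exact mem_ancSet_of_mOpen_of_not_neckLeft hS f w hrest hf hb
      intro m hm
      rcases List.mem_cons.mp hm with rfl | hm
      · exact hx
      · exact internal_subset_ancSet_of_mOpen hS (.cons f w) hrest hx hb m hm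

lemma allColliders_of_mOpen_sdiff {A T : Set V} : ∀ {a b : V} (w : D.Walk a b),
    w.mOpen (A \ T) → (∀ m ∈ w.internal, m ∈ A ∧ m ∉ T) → w.allColliders
  | _, _, .nil _, _, _ => trivial
  | _, _, .cons _ (.nil _), _, _ => trivial
  | _, _, .cons e (.cons f w), hopen, hint => by
      obtain ⟨-, hnoncollider, hrest⟩ := hopen
      have hx := hint _ List.mem_cons_self
      by_cases hc : e.neckRight ∧ f.neckLeft
      · exact ⟨hc.1, hc.2, allColliders_of_mOpen_sdiff (.cons f w) hrest
          fun m hm => hint m (List.mem_cons_of_mem _ hm)⟩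
      · exact absurd hx (hnoncollider hc)

end Walk

lemma IsColliderPath.reverse {a b : V} {w : D.Walk a b} (hw : IsColliderPath w) :
    IsColliderPath w.reverse := by
  obtain ⟨hlen, hnodup, hcol⟩ := hw
  refine ⟨?_, ?_, hcol.reverse⟩
  · rwa [Walk.length_reverse]
  · rw [Walk.support_reverse]
    exact List.nodup_reverse.mpr hnodup

lemma isColliderPath_of_mOpen_sdiff {U : Set V} {a b : V} (w : D.Walk a b)
    (hlen : 0 < w.length) (hnodup : w.support.Nodup) (hopen : w.mOpen (D.ancSet U \ {a, b}))
    (ha : a ∈ D.ancSet U) (hb : b ∈ D.ancSet U) :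
    IsColliderPath w ∧ ∀ m ∈ w.internal, m ∈ D.ancSet U := by
  have hint := w.internal_subset_ancSet_of_mOpen Set.sdiff_subset hopen ha hb
  obtain ⟨ha', hb'⟩ := w.endpoints_not_mem_internal hlen hnodup
  have hnotT : ∀ m ∈ w.internal, m ∉ ({a, b} : Set V) := by
    rintro m hm (rfl | rfl)
    exacts [ha' hm, hb' hm]
  exact ⟨⟨hlen, hnodup, w.allColliders_of_mOpen_sdiff hopen fun m hm => ⟨hint m hm, hnotT m hm⟩⟩,
    hint⟩

end CDG

theorem stmt11_general {V : Type} (D : CDG V) (α β : V)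
    (C : Set V) (hC : D.IsSCC C ∨ C = ∅) (h : ¬ D.VCT α β C) :
    D.mSep {β} {α} (D.ancSet ({α, β} ∪ C) \ {α, β}) := by
  rintro b rfl a rfl ⟨w, hlen, hnodup, hopen⟩
  have hU : ({a, b} : Set V) ⊆ D.ancSet ({a, b} ∪ C) :=
    Set.subset_union_left.trans (D.subset_ancSet _)
  replace hopen : w.mOpen (D.ancSet ({a, b} ∪ C) \ {b, a}) := by rwa [Set.pair_comm b a]
  obtain ⟨hpath, hint⟩ := CDG.isColliderPath_of_mOpen_sdiff w hlen hnodup hopen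
    (hU (by simp)) (hU (by simp))
  refine h ⟨hC, w.reverse, hpath.reverse, fun m hm => hint m ?_⟩
  rwa [CDG.Walk.internal_reverse, List.mem_reverse] at hm

/-- If `(α,β,C)` is not a virtual collider tripath and α≠β, then
β and α are m-separated by an({α,β}∪C)∖{α,β}. -/
theorem stmt11 {V : Type} (D : CDG V) (hloops : ∀ a, D.dir a a) (α β : V)
    (C : Set V) (hC : D.IsSCC C ∨ C = ∅) (hne : α ≠ β) (h : ¬ D.VCT α β C) :
    D.mSep {β} {α} (D.ancSet ({α, β} ∪ C) \ {α, β}) :=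
  stmt11_general D α β C hC h
end

section
/- Let M be a stable n×n real matrix partitioned with index sets U and W, let Σ be positive definite with blocks S∘S = Σ_{WW}, and define D = M_{UU}ᵀ − M_{WU}ᵀ (S∘S)⁻¹ Σ_{WU} and E = M_{WU}ᵀ (S∘S)⁻¹ M_{WU}. Then the pair (D,E) is stabilizable: there exists a matrix K such that D + EK is stable. -/
/-!
A stable `M` admits, for any `C ≻ 0`, some `Q ≻ 0` with `M Q + Q Mᵀ + C ⪯ 0`: for a small
Euler step `B = 1 + h M` the spectrum of `B` lies in the open unit disc, so the Stein equation
`B P Bᵀ = P - C` is solved by the convergent series `P = ∑ Bᵏ C (Bᵏ)ᵀ`, and `Q = h P` works.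
Take `C = Σ` and let `X = Q₁₁ - Q₁₂ Q₂₂⁻¹ Q₂₁` be the Schur complement, `G = Q₁₂ Q₂₂⁻¹` and
`K = -X / 2`. Conjugating the Lyapunov inequality by `[1, -G]` and completing the square gives,
for `F = D + E K` and some `Y`,
  `-(Fᵀ X + X F) = [1, -G] Λ [1, -G]ᵀ + (Σ₁₁ - Σ₁₂ Σ₂₂⁻¹ Σ₂₁) + Yᵀ Σ₂₂⁻¹ Y ≻ 0`
with `Λ ⪰ 0` the slack of the inequality. Hence `X ≻ 0` is a Lyapunov certificate for `F`:
an eigenvector `v` of `F` for `z` gives `2 Re z · Re (v* X v) = Re (v* (Fᵀ X + X F) v) < 0`.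
-/

open Matrix

def IsStableMatrix {n : Type} [Fintype n] [DecidableEq n]
    (M : Matrix n n ℝ) : Prop :=
  ∀ z ∈ spectrum ℂ (M.map (algebraMap ℝ ℂ)), z.re < 0

open Filter Topology

theorem spectrum.exists_norm_pow_le_geometric {A : Type*} [NormedRing A] [NormedAlgebra ℂ A]
    [CompleteSpace A] {a : A} (ha : ∀ z ∈ spectrum ℂ a, ‖z‖ < 1) :
    ∃ r : ℝ, 0 ≤ r ∧ r < 1 ∧ ∀ᶠ k in atTop, ‖a ^ k‖ ≤ r ^ k := by
  have hρ : spectralRadius ℂ a < 1 := by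
    rcases (spectrum ℂ a).eq_empty_or_nonempty with he | hne
    · simp [spectralRadius, he]
    · exact_mod_cast spectrum.spectralRadius_lt_of_forall_lt_of_nonempty hne
        (r := 1) fun z hz => by exact_mod_cast ha z hz
  obtain ⟨r, hρr, hr1⟩ := ENNReal.lt_iff_exists_nnreal_btwn.mp hρ
  refine ⟨r, r.coe_nonneg, by exact_mod_cast hr1, ?_⟩
  filter_upwards [(spectrum.pow_norm_pow_one_div_tendsto_nhds_spectralRadius a).eventually_lt_const
    hρr, eventually_ne_atTop 0] with k hk hk0
  have hroot : ‖a ^ k‖ ^ (1 / k : ℝ) < r :=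
    (ENNReal.ofReal_lt_iff_lt_toReal (by positivity) ENNReal.coe_ne_top).mp hk
  calc ‖a ^ k‖ = (‖a ^ k‖ ^ (1 / k : ℝ)) ^ k := by
        rw [one_div, Real.rpow_inv_natCast_pow (norm_nonneg _) hk0]
    _ ≤ (r : ℝ) ^ k := pow_le_pow_left₀ (by positivity) hroot.le k

theorem Complex.eventually_norm_one_add_mul_lt_one {z : ℂ} (hz : z.re < 0) :
    ∀ᶠ t : ℝ in 𝓝[>] 0, ‖1 + t * z‖ < 1 := by
  have hz0 : 0 < ‖z‖ ^ 2 := by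
    have : z ≠ 0 := fun h => by simp [h] at hz
    positivity
  filter_upwards [Ioo_mem_nhdsGT (div_pos (neg_pos.mpr hz) hz0)] with t ⟨ht0, ht⟩
  rw [lt_div_iff₀ hz0, Complex.sq_norm, Complex.normSq_apply] at ht
  rw [← sq_lt_one_iff₀ (norm_nonneg _), Complex.sq_norm, Complex.normSq_apply]
  simp only [Complex.add_re, Complex.add_im, Complex.mul_re, Complex.mul_im, Complex.one_re,
    Complex.one_im, Complex.ofReal_re, Complex.ofReal_im]
  nlinarith

theorem HasSum.dotProduct_mulVec {ι n : Type*} [Fintype n] {f : ι → Matrix n n ℝ}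
    {P : Matrix n n ℝ} (hf : HasSum f P) (x : n → ℝ) :
    HasSum (fun i => x ⬝ᵥ (f i *ᵥ x)) (x ⬝ᵥ (P *ᵥ x)) :=
  hf.map ({ toFun := fun X => x ⬝ᵥ (X *ᵥ x), map_zero' := by simp,
            map_add' := fun X Y => by simp [add_mulVec] } : Matrix n n ℝ →+ ℝ)
    (continuous_const.dotProduct (continuous_id.matrix_mulVec continuous_const))

namespace Matrix

section Real

variable {m n : Type*} [Fintype n]

omit [Fintype n] in
theorem PosDef.isSymm {R : Matrix n n ℝ} (hR : R.PosDef) : R.IsSymm :=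
  isHermitian_iff_isSymm.mp hR.isHermitian

theorem PosSemidef.mul_mul_transpose_same [Finite m] {R : Matrix n n ℝ} (hR : R.PosSemidef)
    (B : Matrix m n ℝ) : (B * R * Bᵀ).PosSemidef := by
  simpa [conjTranspose_eq_transpose_of_trivial] using hR.mul_mul_conjTranspose_same B

theorem PosSemidef.transpose_mul_mul_same [Finite m] {R : Matrix n n ℝ} (hR : R.PosSemidef)
    (B : Matrix n m ℝ) : (Bᵀ * R * B).PosSemidef := by
  simpa [conjTranspose_eq_transpose_of_trivial] using hR.conjTranspose_mul_mul_same B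

end Real

section Stein

variable {n : Type*} [Fintype n] [DecidableEq n]

theorem exists_mulVec_eq_smul_of_mem_spectrum {K : Type*} [Field K] {A : Matrix n n K} {z : K}
    (hz : z ∈ spectrum K A) : ∃ v ≠ 0, A *ᵥ v = z • v := by
  rw [← spectrum_toLin', ← Module.End.hasEigenvalue_iff_mem_spectrum] at hz
  obtain ⟨v, hv, hv0⟩ := hz.exists_hasEigenvector
  exact ⟨v, hv0, by simpa using Module.End.mem_eigenspace_iff.mp hv⟩

-- The Frobenius norm is chosen because it is invariant under transposition and complexification.
open scoped Matrix.Norms.Frobenius in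
theorem summable_pow_mul_mul_transpose_pow {B : Matrix n n ℝ}
    (hB : ∀ z ∈ spectrum ℂ (B.map (algebraMap ℝ ℂ)), ‖z‖ < 1) (C : Matrix n n ℝ) :
    Summable fun k => B ^ k * C * (B ^ k)ᵀ := by
  obtain ⟨r, hr0, hr1, hev⟩ := spectrum.exists_norm_pow_le_geometric hB
  have hnorm (k : ℕ) : ‖B ^ k‖ = ‖B.map (algebraMap ℝ ℂ) ^ k‖ := by
    rw [← Matrix.map_pow _ (algebraMap ℝ ℂ), frobenius_norm_map_eq _ _ fun x => by simp]
  have hgeom := summable_geometric_of_lt_one (by positivity) (pow_lt_one₀ hr0 hr1 two_ne_zero)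
  refine Summable.of_norm_bounded_eventually (hgeom.mul_left ‖C‖) ?_
  rw [Nat.cofinite_eq_atTop]
  filter_upwards [hev] with k hk
  calc ‖B ^ k * C * (B ^ k)ᵀ‖ ≤ ‖B ^ k‖ * ‖C‖ * ‖(B ^ k)ᵀ‖ :=
        (frobenius_norm_mul _ _).trans (mul_le_mul_of_nonneg_right (frobenius_norm_mul _ _)
          (norm_nonneg _))
    _ = ‖C‖ * ‖B ^ k‖ ^ 2 := by rw [frobenius_norm_transpose]; ring
    _ ≤ ‖C‖ * (r ^ 2) ^ k := by
        rw [← pow_mul, mul_comm 2 k, pow_mul, hnorm]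
        gcongr

theorem exists_posDef_stein {B C : Matrix n n ℝ}
    (hB : ∀ z ∈ spectrum ℂ (B.map (algebraMap ℝ ℂ)), ‖z‖ < 1) (hC : C.PosDef) :
    ∃ P : Matrix n n ℝ, P.PosDef ∧ B * P * Bᵀ = P - C := by
  set f : ℕ → Matrix n n ℝ := fun k => B ^ k * C * (B ^ k)ᵀ
  have hf : HasSum f (∑' k, f k) := (summable_pow_mul_mul_transpose_pow hB C).hasSum
  have hfpsd (k : ℕ) : (f k).PosSemidef := hC.posSemidef.mul_mul_transpose_same (B ^ k)
  refine ⟨∑' k, f k, .of_dotProduct_mulVec_pos ?_ fun x hx => ?_, ?_⟩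
  · rw [IsHermitian, conjTranspose_eq_transpose_of_trivial, transpose_tsum]
    simp [f, transpose_mul, hC.isSymm.eq, Matrix.mul_assoc]
  · rw [star_trivial]
    refine lt_of_lt_of_le ?_ (le_hasSum (hf.dotProduct_mulVec x) 0 fun k _ => ?_)
    · simpa [f] using hC.dotProduct_mulVec_pos hx
    · simpa using (hfpsd k).dotProduct_mulVec_nonneg x
  · have hstep (k : ℕ) : f (k + 1) = B * f k * Bᵀ := by
      simp only [f, pow_succ', transpose_mul, Matrix.mul_assoc]
    have hshift : HasSum (fun k => f (k + 1)) (B * (∑' k, f k) * Bᵀ) := by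
      simpa only [hstep] using (hf.mul_left B).mul_right Bᵀ
    exact hshift.unique (by simpa [f] using (hasSum_nat_add_iff' 1).mpr hf)

end Stein

theorem star_dotProduct_lyapunov_mulVec {n R : Type*} [Fintype n] [CommRing R] [StarRing R]
    {F : Matrix n n R} {v : n → R} {z : R} (hv : F *ᵥ v = z • v) (S : Matrix n n R) :
    star v ⬝ᵥ ((Fᴴ * S + S * F) *ᵥ v) = (star z + z) * (star v ⬝ᵥ (S *ᵥ v)) := by
  rw [add_mulVec, dotProduct_add, ← mulVec_mulVec, ← mulVec_mulVec, dotProduct_mulVec,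
    ← star_mulVec, hv, star_smul, smul_dotProduct, mulVec_smul, dotProduct_smul]
  simp only [smul_eq_mul]
  ring

section Complexification

variable {n : Type*} [Fintype n]

theorem re_star_dotProduct_map_mulVec (R : Matrix n n ℝ) (v : n → ℂ) :
    (star v ⬝ᵥ (R.map (algebraMap ℝ ℂ) *ᵥ v)).re =
      (fun i => (v i).re) ⬝ᵥ (R *ᵥ fun i => (v i).re) +
        (fun i => (v i).im) ⬝ᵥ (R *ᵥ fun i => (v i).im) := by
  simp only [dotProduct, mulVec, Finset.mul_sum, Complex.re_sum, ← Finset.sum_add_distrib]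
  refine Finset.sum_congr rfl fun i _ => Finset.sum_congr rfl fun j _ => ?_
  simp only [Pi.star_apply, map_apply, Complex.coe_algebraMap, Complex.mul_re, Complex.mul_im,
    Complex.star_def, Complex.conj_re, Complex.conj_im, Complex.ofReal_re, Complex.ofReal_im]
  ring

theorem PosDef.re_star_dotProduct_map_mulVec_pos {R : Matrix n n ℝ} (hR : R.PosDef)
    {v : n → ℂ} (hv : v ≠ 0) : 0 < (star v ⬝ᵥ (R.map (algebraMap ℝ ℂ) *ᵥ v)).re := by
  rw [re_star_dotProduct_map_mulVec]
  have hre := hR.posSemidef.dotProduct_mulVec_nonneg fun i => (v i).re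
  have him := hR.posSemidef.dotProduct_mulVec_nonneg fun i => (v i).im
  simp only [star_trivial] at hre him
  by_cases h : (fun i => (v i).re) = 0
  · have him0 : (fun i => (v i).im) ≠ 0 := fun h' =>
      hv (funext fun i => Complex.ext (congrFun h i) (congrFun h' i))
    have := hR.dotProduct_mulVec_pos him0
    rw [star_trivial] at this
    linarith
  · have := hR.dotProduct_mulVec_pos h
    rw [star_trivial] at this
    linarith

end Complexification

section SchurComplement

theorem IsSymm.toBlocks₁₂_transpose {U W α : Type*} {R : Matrix (U ⊕ W) (U ⊕ W) α}
    (hR : R.IsSymm) : R.toBlocks₁₂ᵀ = R.toBlocks₂₁ :=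
  congrArg toBlocks₂₁ hR.eq

theorem PosDef.toBlocks₂₂ {U W : Type*} {R : Matrix (U ⊕ W) (U ⊕ W) ℝ} (hR : R.PosDef) :
    R.toBlocks₂₂.PosDef :=
  hR.submatrix Sum.inr_injective

variable {U W α : Type*} [Fintype W] [DecidableEq W] [CommRing α]

noncomputable def schurComplement₂₂ (R : Matrix (U ⊕ W) (U ⊕ W) α) : Matrix U U α :=
  R.toBlocks₁₁ - R.toBlocks₁₂ * R.toBlocks₂₂⁻¹ * R.toBlocks₂₁

theorem IsSymm.toBlocks₂₂_inv_transpose {R : Matrix (U ⊕ W) (U ⊕ W) α} (hR : R.IsSymm) :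
    (R.toBlocks₂₂⁻¹)ᵀ = R.toBlocks₂₂⁻¹ := by
  rw [transpose_nonsing_inv]
  exact congrArg (·⁻¹) (congrArg toBlocks₂₂ hR.eq)

theorem IsSymm.schurComplement₂₂ {R : Matrix (U ⊕ W) (U ⊕ W) α} (hR : R.IsSymm) :
    R.schurComplement₂₂.IsSymm := by
  have h₁₁ : R.toBlocks₁₁ᵀ = R.toBlocks₁₁ := congrArg toBlocks₁₁ hR.eq
  have h₂₁ : R.toBlocks₂₁ᵀ = R.toBlocks₁₂ := congrArg toBlocks₁₂ hR.eq
  rw [IsSymm, Matrix.schurComplement₂₂, transpose_sub, transpose_mul, transpose_mul, h₁₁, h₂₁,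
    hR.toBlocks₁₂_transpose, hR.toBlocks₂₂_inv_transpose, Matrix.mul_assoc]

variable [Fintype U] [DecidableEq U]

theorem fromCols_one_neg_mul_mul_transpose {R : Matrix (U ⊕ W) (U ⊕ W) α} (hR : R.IsSymm)
    (h₂₂ : IsUnit R.toBlocks₂₂.det) (G : Matrix U W α) :
    fromCols (1 : Matrix U U α) (-G) * R * (fromCols (1 : Matrix U U α) (-G))ᵀ =
      R.schurComplement₂₂ + (G - R.toBlocks₁₂ * R.toBlocks₂₂⁻¹) * R.toBlocks₂₂ *
        (G - R.toBlocks₁₂ * R.toBlocks₂₂⁻¹)ᵀ := by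
  have hblocks : fromCols (1 : Matrix U U α) (-G) * R * (fromCols (1 : Matrix U U α) (-G))ᵀ =
      R.toBlocks₁₁ - G * R.toBlocks₂₁ - R.toBlocks₁₂ * Gᵀ + G * R.toBlocks₂₂ * Gᵀ := by
    conv_lhs => rw [← fromBlocks_toBlocks R]
    rw [transpose_fromCols, fromCols_mul_fromBlocks, fromCols_mul_fromRows]
    simp only [transpose_one, transpose_neg, Matrix.one_mul, Matrix.neg_mul, Matrix.mul_one,
      Matrix.mul_neg, Matrix.add_mul, Matrix.mul_assoc]
    abel
  have hcancel (Y : Matrix W U α) : R.toBlocks₂₂ * (R.toBlocks₂₂⁻¹ * Y) = Y := by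
    rw [← Matrix.mul_assoc, mul_nonsing_inv _ h₂₂, Matrix.one_mul]
  have hcancel' (Y : Matrix U W α) : Y * R.toBlocks₂₂⁻¹ * R.toBlocks₂₂ = Y := by
    rw [Matrix.mul_assoc, nonsing_inv_mul _ h₂₂, Matrix.mul_one]
  rw [hblocks, schurComplement₂₂]
  simp only [transpose_sub, transpose_mul, hR.toBlocks₁₂_transpose, hR.toBlocks₂₂_inv_transpose,
    Matrix.sub_mul, Matrix.mul_sub, hcancel', Matrix.mul_assoc, hcancel]
  abel

theorem fromCols_one_neg_mul_lyapunov_mul_transpose {M Q : Matrix (U ⊕ W) (U ⊕ W) α}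
    {G : Matrix U W α} (hQ : Q.IsSymm) (h₂₂ : IsUnit Q.toBlocks₂₂.det)
    (hG : G = Q.toBlocks₁₂ * Q.toBlocks₂₂⁻¹) :
    fromCols (1 : Matrix U U α) (-G) * (M * Q + Q * Mᵀ) * (fromCols (1 : Matrix U U α) (-G))ᵀ =
      (M.toBlocks₁₁ - G * M.toBlocks₂₁) * Q.schurComplement₂₂ +
        Q.schurComplement₂₂ * (M.toBlocks₁₁ - G * M.toBlocks₂₁)ᵀ := by
  set T := fromCols (1 : Matrix U U α) (-G)
  have hQT : Q * Tᵀ = fromRows Q.schurComplement₂₂ (0 : Matrix W U α) := by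
    have hGt : Gᵀ = Q.toBlocks₂₂⁻¹ * Q.toBlocks₂₁ := by
      rw [hG, transpose_mul, hQ.toBlocks₂₂_inv_transpose, hQ.toBlocks₁₂_transpose]
    conv_lhs => rw [← fromBlocks_toBlocks Q]
    rw [transpose_fromCols, fromBlocks_mul_fromRows, schurComplement₂₂]
    simp only [transpose_one, transpose_neg, hGt, Matrix.mul_one, Matrix.mul_neg,
      ← sub_eq_add_neg, ← Matrix.mul_assoc, mul_nonsing_inv _ h₂₂, Matrix.one_mul, sub_self]
  have hTMQT : T * M * Q * Tᵀ = (M.toBlocks₁₁ - G * M.toBlocks₂₁) * Q.schurComplement₂₂ := by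
    rw [Matrix.mul_assoc _ Q, hQT]
    conv_lhs => rw [← fromBlocks_toBlocks M]
    rw [Matrix.mul_assoc, fromBlocks_mul_fromRows, fromCols_mul_fromRows]
    simp only [Matrix.mul_zero, add_zero, Matrix.one_mul, sub_eq_add_neg, Matrix.add_mul,
      Matrix.neg_mul, Matrix.mul_assoc]
  calc T * (M * Q + Q * Mᵀ) * Tᵀ = T * M * Q * Tᵀ + (T * M * Q * Tᵀ)ᵀ := by
        simp only [Matrix.mul_add, Matrix.add_mul, transpose_mul, transpose_transpose, hQ.eq,
          Matrix.mul_assoc]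
    _ = _ := by rw [hTMQT, transpose_mul, hQ.schurComplement₂₂.eq]

theorem PosDef.schurComplement₂₂ {R : Matrix (U ⊕ W) (U ⊕ W) ℝ} (hR : R.PosDef) :
    R.schurComplement₂₂.PosDef := by
  have hR' := fromCols_one_neg_mul_mul_transpose hR.isSymm hR.toBlocks₂₂.det_pos.ne'.isUnit
    (R.toBlocks₁₂ * R.toBlocks₂₂⁻¹)
  rw [sub_self, Matrix.zero_mul, Matrix.zero_mul, add_zero] at hR'
  rw [← hR']
  have hinj : Function.Injective
      (fromCols (1 : Matrix U U ℝ) (-(R.toBlocks₁₂ * R.toBlocks₂₂⁻¹))).vecMul := fun v w h => by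
    simpa [vecMul_fromCols] using congrArg (· ∘ Sum.inl) h
  simpa [conjTranspose_eq_transpose_of_trivial] using hR.mul_mul_conjTranspose_same hinj

end SchurComplement

theorem lyapunov_feedback_complete_square {U W : Type*} [Fintype U] [Fintype W] [DecidableEq W]
    {A₀ X F : Matrix U U ℝ} {B : Matrix W U ℝ} {H : Matrix U W ℝ} {S : Matrix W W ℝ}
    (hX : X.IsSymm) (hS : S.IsSymm) (hSu : IsUnit S.det)
    (hF : F = (A₀ + H * B)ᵀ + Bᵀ * S⁻¹ * B * (-(2⁻¹ : ℝ) • X)) :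
    Fᵀ * X + X * F = A₀ * X + X * A₀ᵀ + H * S * Hᵀ
      - (B * X - S * Hᵀ)ᵀ * S⁻¹ * (B * X - S * Hᵀ) := by
  have hinv (Y : Matrix W U ℝ) : S⁻¹ * (S * Y) = Y := by
    rw [← Matrix.mul_assoc, nonsing_inv_mul _ hSu, Matrix.one_mul]
  have hinv' (Y : Matrix W U ℝ) : S * (S⁻¹ * Y) = Y := by
    rw [← Matrix.mul_assoc, mul_nonsing_inv _ hSu, Matrix.one_mul]
  have hinvt : (S⁻¹)ᵀ = S⁻¹ := by rw [transpose_nonsing_inv, hS.eq]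
  subst hF
  simp only [transpose_add, transpose_mul, transpose_smul, transpose_transpose, transpose_sub,
    hX.eq, hS.eq, hinvt, Matrix.add_mul, Matrix.mul_add, Matrix.sub_mul, Matrix.mul_sub,
    Matrix.smul_mul, Matrix.mul_smul, Matrix.mul_assoc, hinv, hinv']
  module

theorem posDef_neg_lyapunov_feedback {U W : Type*} [Fintype U] [Fintype W] [DecidableEq U]
    [DecidableEq W] {M Q Sg : Matrix (U ⊕ W) (U ⊕ W) ℝ} (hQ : Q.PosDef) (hSg : Sg.PosDef)
    (hΛ : (-(M * Q + Q * Mᵀ) - Sg).PosSemidef) {F : Matrix U U ℝ}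
    (hF : F = (M.toBlocks₁₁ᵀ - M.toBlocks₂₁ᵀ * Sg.toBlocks₂₂⁻¹ * Sg.toBlocks₂₁) +
      (M.toBlocks₂₁ᵀ * Sg.toBlocks₂₂⁻¹ * M.toBlocks₂₁) * (-(2⁻¹ : ℝ) • Q.schurComplement₂₂)) :
    (-(Fᵀ * Q.schurComplement₂₂ + Q.schurComplement₂₂ * F)).PosDef := by
  set X := Q.schurComplement₂₂
  set G := Q.toBlocks₁₂ * Q.toBlocks₂₂⁻¹
  set T := fromCols (1 : Matrix U U ℝ) (-G)
  set S := Sg.toBlocks₂₂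
  set H := G - Sg.toBlocks₁₂ * S⁻¹
  set A₀ := M.toBlocks₁₁ - G * M.toBlocks₂₁
  set Y := M.toBlocks₂₁ * X - S * Hᵀ
  have hSu : IsUnit S.det := hSg.toBlocks₂₂.det_pos.ne'.isUnit
  have hD : M.toBlocks₁₁ᵀ - M.toBlocks₂₁ᵀ * S⁻¹ * Sg.toBlocks₂₁ = (A₀ + H * M.toBlocks₂₁)ᵀ := by
    rw [show A₀ + H * M.toBlocks₂₁ = M.toBlocks₁₁ - Sg.toBlocks₁₂ * S⁻¹ * M.toBlocks₂₁ by
      simp only [A₀, H, Matrix.sub_mul]; abel]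
    rw [transpose_sub, transpose_mul, transpose_mul, hSg.isSymm.toBlocks₂₂_inv_transpose,
      hSg.isSymm.toBlocks₁₂_transpose, Matrix.mul_assoc]
  have hTΛT : T * (-(M * Q + Q * Mᵀ) - Sg) * Tᵀ =
      -(A₀ * X + X * A₀ᵀ) - (Sg.schurComplement₂₂ + H * S * Hᵀ) := by
    rw [Matrix.mul_sub, Matrix.sub_mul, Matrix.mul_neg, Matrix.neg_mul,
      fromCols_one_neg_mul_lyapunov_mul_transpose hQ.isSymm hQ.toBlocks₂₂.det_pos.ne'.isUnit rfl,
      fromCols_one_neg_mul_mul_transpose hSg.isSymm hSu G]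
  have key : -(Fᵀ * X + X * F) =
      T * (-(M * Q + Q * Mᵀ) - Sg) * Tᵀ + Sg.schurComplement₂₂ + Yᵀ * S⁻¹ * Y := by
    rw [lyapunov_feedback_complete_square hQ.isSymm.schurComplement₂₂ hSg.toBlocks₂₂.isSymm hSu
      (hF.trans (by rw [hD])), hTΛT]
    abel
  rw [key]
  exact (PosDef.posSemidef_add (hΛ.mul_mul_transpose_same T) hSg.schurComplement₂₂).add_posSemidef
    (hSg.toBlocks₂₂.inv.posSemidef.transpose_mul_mul_same Y)

end Matrix

section Stability

variable {n : Type} [Fintype n] [DecidableEq n]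

theorem isStableMatrix_of_lyapunov {F S : Matrix n n ℝ} (hS : S.PosDef)
    (hFS : (-(Fᵀ * S + S * F)).PosDef) : IsStableMatrix F := by
  intro z hz
  obtain ⟨v, hv0, hv⟩ := exists_mulVec_eq_smul_of_mem_spectrum hz
  have hmap : (-(Fᵀ * S + S * F)).map (algebraMap ℝ ℂ) =
      -((F.map (algebraMap ℝ ℂ))ᴴ * S.map (algebraMap ℝ ℂ) +
        S.map (algebraMap ℝ ℂ) * F.map (algebraMap ℝ ℂ)) := by
    rw [← conjTranspose_map _ fun x => by simp, conjTranspose_eq_transpose_of_trivial,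
      Matrix.map_neg, Matrix.map_add, Matrix.map_mul, Matrix.map_mul] <;> simp
  have h1 := hFS.re_star_dotProduct_map_mulVec_pos hv0
  have h2 := hS.re_star_dotProduct_map_mulVec_pos hv0
  rw [hmap, neg_mulVec, dotProduct_neg, star_dotProduct_lyapunov_mulVec hv] at h1
  simp only [Complex.neg_re, Complex.mul_re, Complex.add_re, Complex.add_im, Complex.star_def,
    Complex.conj_re, Complex.conj_im, neg_add_cancel, zero_mul, sub_zero] at h1
  nlinarith

theorem IsStableMatrix.exists_spectrum_one_add_smul_norm_lt_one {M : Matrix n n ℝ}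
    (hM : IsStableMatrix M) :
    ∃ h : ℝ, 0 < h ∧ ∀ z ∈ spectrum ℂ ((1 + h • M).map (algebraMap ℝ ℂ)), ‖z‖ < 1 := by
  set Mc := M.map (algebraMap ℝ ℂ)
  have hev : ∀ᶠ t : ℝ in 𝓝[>] 0, ∀ w ∈ spectrum ℂ Mc, ‖1 + t * w‖ < 1 :=
    (Matrix.finite_spectrum Mc).eventually_all.mpr fun w hw =>
      Complex.eventually_norm_one_add_mul_lt_one (hM w hw)
  obtain ⟨h, hh, hpos⟩ := (hev.and self_mem_nhdsWithin).exists
  refine ⟨h, hpos, fun z hz => ?_⟩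
  have hunit : IsUnit (h : ℂ) := isUnit_iff_ne_zero.mpr (by exact_mod_cast hpos.ne')
  have hmap : (1 + h • M).map (algebraMap ℝ ℂ) = algebraMap ℂ _ 1 + hunit.unit • Mc := by
    ext i j
    by_cases hij : i = j <;> simp [Mc, hij, Units.smul_def]
  rw [hmap, ← spectrum.singleton_add_eq, spectrum.unit_smul_eq_smul] at hz
  obtain ⟨_, rfl, _, ⟨w, hw, rfl⟩, rfl⟩ := hz
  simpa using hh w hw

theorem IsStableMatrix.exists_lyapunov {M : Matrix n n ℝ} (hM : IsStableMatrix M)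
    {C : Matrix n n ℝ} (hC : C.PosDef) :
    ∃ Q : Matrix n n ℝ, Q.PosDef ∧ (-(M * Q + Q * Mᵀ) - C).PosSemidef := by
  obtain ⟨h, hh, hB⟩ := hM.exists_spectrum_one_add_smul_norm_lt_one
  obtain ⟨P, hP, hstein⟩ := exists_posDef_stein hB hC
  refine ⟨h • P, hP.smul hh, ?_⟩
  have hΛ : -(M * (h • P) + h • P * Mᵀ) - C = (h • M) * P * (h • M)ᵀ := by
    simp only [transpose_add, transpose_one, transpose_smul, Matrix.add_mul, Matrix.mul_add,
      Matrix.smul_mul, Matrix.mul_smul, Matrix.one_mul, Matrix.mul_one] at hstein ⊢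
    linear_combination (norm := module) -hstein
  rw [hΛ]
  exact hP.posSemidef.mul_mul_transpose_same (h • M)

end Stability

/-- for a stable M (blocks indexed by U and W) and positive
definite Σ, with D = M_{UU}ᵀ − M_{WU}ᵀ (Σ_{WW})⁻¹ Σ_{WU} and
E = M_{WU}ᵀ (Σ_{WW})⁻¹ M_{WU}, the pair (D,E) is stabilizable. -/
theorem stmt17 {U W : Type} [Fintype U] [Fintype W]
    [DecidableEq U] [DecidableEq W]
    (M Sg : Matrix (U ⊕ W) (U ⊕ W) ℝ)
    (hM : IsStableMatrix M) (hSg : Sg.PosDef) :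
    ∃ K : Matrix U U ℝ,
      IsStableMatrix
        (((M.toBlocks₁₁)ᵀ - (M.toBlocks₂₁)ᵀ * (Sg.toBlocks₂₂)⁻¹ * Sg.toBlocks₂₁)
          + ((M.toBlocks₂₁)ᵀ * (Sg.toBlocks₂₂)⁻¹ * M.toBlocks₂₁) * K) := by
  obtain ⟨Q, hQ, hΛ⟩ := hM.exists_lyapunov hSg
  exact ⟨-(2⁻¹ : ℝ) • Q.schurComplement₂₂, isStableMatrix_of_lyapunov hQ.schurComplement₂₂
    (posDef_neg_lyapunov_feedback hQ hSg hΛ rfl)⟩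
end
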